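/- arXiv:2605.09331 — 9 statements merged into one kernel-verified Lean document; each statement's English description precedes it below -/
import Mathlib

section
/- Let h(x) = a + b x² + c x⁴ with a = 3.4445, b = −4.7750, c = 2.0315. Then h is strictly decreasing on the interval [0, 0.6]. -/
/-- The scaling factor function h(x) = a + b x² + c x⁴ associated with the Muon
Newton–Schulz polynomial, with a = 3.4445, b = −4.7750, c = 2.0315. -/
noncomputable def h (x : ℝ) : ℝ := 3.4445 + (-4.7750) * x ^ 2 + 2.0315 * x ^ 4

/-- h is strictly decreasing on the interval [0, 0.6]. -/
theorem stmt_1 : StrictAntiOn h (Set.Icc (0 : ℝ) 0.6) := by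
  intro x hx y hy hxy
  simp only [Set.mem_Icc] at hx hy
  unfold h
  have hd : (0:ℝ) < y ^ 2 - x ^ 2 := by nlinarith [hx.1, hy.1]
  have hf : (0:ℝ) < 4.7750 - 2.0315 * (x ^ 2 + y ^ 2) := by nlinarith [hx.2, hy.2, hx.1, hy.1]
  nlinarith [mul_pos hd hf]
end

section
/- Let ρ(x) = a x + b x³ + c x⁵ with a = 3.4445, b = −4.7750, c = 2.0315. Then ρ is strictly increasing on the interval [0, 0.554]. -/
/-- The base Muon Newton–Schulz polynomial ρ(x) = a x + b x³ + c x⁵ with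
a = 3.4445, b = −4.7750, c = 2.0315. -/
noncomputable def ρ (x : ℝ) : ℝ := 3.4445 * x + (-4.7750) * x ^ 3 + 2.0315 * x ^ 5

/-- ρ is strictly increasing on the interval [0, 0.554]. -/
theorem stmt_2 : StrictMonoOn ρ (Set.Icc (0 : ℝ) 0.554) := by
  rintro x ⟨hx0, hx1⟩ y ⟨hy0, hy1⟩ hxy
  have hQ : 0 < 3.4445 + (-4.7750) * (x^2 + x*y + y^2) +
      2.0315 * (x^4 + x^3*y + x^2*y^2 + x*y^3 + y^4) := by
    nlinarith [sq_nonneg (x-y), sq_nonneg (x+y-1.108),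
      mul_nonneg (sub_nonneg.mpr hx1) (sub_nonneg.mpr hy1), mul_nonneg hx0 hy0,
      sq_nonneg (x*y - 0.306916),
      mul_nonneg (mul_nonneg hx0 hy0) (mul_nonneg (sub_nonneg.mpr hx1) (sub_nonneg.mpr hy1)),
      sq_nonneg (x+y), sq_nonneg (x*y)]
  have hd : 0 < y - x := sub_pos.mpr hxy
  have := mul_pos hd hQ
  unfold ρ
  nlinarith [this]
end

section
/- Let ρ(x) = a x + b x³ + c x⁵ with a = 3.4445, b = −4.7750, c = 2.0315. Then for every x ∈ [0, 0.6], one has ρ(x) ≥ 1.988 x. -/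
/-- For every x ∈ [0, 0.6], ρ(x) ≥ 1.988 x. -/
theorem stmt_3 : ∀ x ∈ Set.Icc (0 : ℝ) 0.6, 1.988 * x ≤ ρ x := by
  rintro x ⟨h0, h1⟩
  unfold ρ
  nlinarith [sq_nonneg x, sq_nonneg (x^2 - 0.36), mul_nonneg h0 h0, sq_nonneg (x*(x^2-0.36)), mul_nonneg (mul_nonneg h0 h0) h0]
end

section
/- Let ρ(x) = a x + b x³ + c x⁵ with a = 3.4445, b = −4.7750, c = 2.0315. Then ρ maps the interval [0, 1.205] into itself: for every x ∈ [0, 1.205], 0 ≤ ρ(x) ≤ 1.205. -/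
/-- ρ maps the interval [0, 1.205] into itself: for every x ∈ [0, 1.205],
0 ≤ ρ(x) ≤ 1.205. -/
theorem stmt_4 : ∀ x ∈ Set.Icc (0 : ℝ) 1.205, 0 ≤ ρ x ∧ ρ x ≤ 1.205 := by
  rintro x ⟨hx0, hx1⟩
  unfold ρ
  constructor
  · nlinarith [sq_nonneg (x^2 - 1.1752), sq_nonneg x, mul_nonneg hx0 hx0,
      mul_nonneg (mul_nonneg hx0 hx0) hx0]
  · nlinarith [sq_nonneg (x^2 - 0.30755),
      mul_nonneg (sub_nonneg.2 hx1) (sq_nonneg (x^2 - 0.30755)),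
      mul_nonneg hx0 (sq_nonneg (x^2 - 0.30755)),
      mul_nonneg (mul_nonneg hx0 (sub_nonneg.2 hx1)) (sq_nonneg (x - 0.55457)),
      sq_nonneg (x - 0.55457)]
end

section
/- Let ρ(x) = a x + b x³ + c x⁵ with a = 3.4445, b = −4.7750, c = 2.0315, and let I = [0.6, 1.205]. Then I is strictly forward-invariant under ρ: for every x ∈ I one has 0.681 ≤ ρ(x) ≤ 1.194; in particular ρ(I) ⊆ I. -/
/-- The compact interval I = [0.6, 1.205] is strictly forward-invariant under ρ:
for every x ∈ I one has 0.681 ≤ ρ(x) ≤ 1.194; in particular ρ(I) ⊆ I. -/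
theorem stmt_5 :
    (∀ x ∈ Set.Icc (0.6 : ℝ) 1.205, 0.681 ≤ ρ x ∧ ρ x ≤ 1.194) ∧
    Set.MapsTo ρ (Set.Icc (0.6 : ℝ) 1.205) (Set.Icc (0.6 : ℝ) 1.205) := by
  have key : ∀ x ∈ Set.Icc (0.6 : ℝ) 1.205, 0.681 ≤ ρ x ∧ ρ x ≤ 1.194 := by
    rintro x ⟨h1, h2⟩
    unfold ρ
    constructor
    · nlinarith [sq_nonneg (x - 1.05), sq_nonneg (x*x - 1.1),
        mul_nonneg (sub_nonneg.2 h1) (sub_nonneg.2 h2),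
        sq_nonneg ((x-1.05)*(x-0.6)), sq_nonneg ((x-1.05)*x),
        mul_nonneg (mul_nonneg (sub_nonneg.2 h1) (sub_nonneg.2 h2)) (sq_nonneg (x-1.05))]
    · nlinarith [sq_nonneg (x - 0.6), sq_nonneg (x - 1.205),
        mul_nonneg (sub_nonneg.2 h1) (sub_nonneg.2 h2),
        mul_nonneg (mul_nonneg (sub_nonneg.2 h1) (sub_nonneg.2 h2)) (sq_nonneg (x-1.05)),
        mul_nonneg (mul_nonneg (sub_nonneg.2 h1) (sub_nonneg.2 h2)) (sq_nonneg (x-0.9)),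
        mul_nonneg (mul_nonneg (sub_nonneg.2 h1) (sub_nonneg.2 h2)) (mul_nonneg (sub_nonneg.2 h1) (sub_nonneg.2 h2))]
  refine ⟨key, fun x hx => ?_⟩
  have := key x hx
  exact ⟨by linarith [this.1], by linarith [this.2]⟩
end

section
/- Let ρ(x) = a x + b x³ + c x⁵ with a = 3.4445, b = −4.7750, c = 2.0315, and let ρ⁽⁵⁾ denote the 5-fold composition of ρ with itself. Then for every x with 0 < x ≤ 0.02 / a⁴, one has ρ⁽⁵⁾(x) ≥ 483 x. -/
lemma rho_step (x U : ℝ) (hx : 0 < x) (hxU : x ≤ U) (hU : U ≤ 0.02) :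
    0 < ρ x ∧ ρ x ≤ 3.4445 * U ∧ (3.4445 - 4.775 * U ^ 2) * x ≤ ρ x := by
  have hU0 : 0 < U := lt_of_lt_of_le hx hxU
  have h1 : 0 ≤ x * ((U - x) * (U + x)) := by
    apply mul_nonneg hx.le
    apply mul_nonneg (by linarith) (by linarith)
  have h2 : 0 ≤ x ^ 5 := by positivity
  have hx2 : x ^ 2 ≤ 0.0004 := by nlinarith
  refine ⟨?_, ?_, ?_⟩
  · unfold ρ; nlinarith [pow_pos hx 3, pow_pos hx 5, sq_nonneg x]
  · unfold ρ; nlinarith [pow_pos hx 3]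
  · unfold ρ; nlinarith

/-- For every x with 0 < x ≤ 0.02 / a⁴, the fifth iterate satisfies ρ⁽⁵⁾(x) ≥ 483 x. -/
theorem stmt_6 :
    ∀ x : ℝ, 0 < x → x ≤ 0.02 / 3.4445 ^ 4 → 483 * x ≤ ρ^[5] x := by
  intro x hx hxU
  have hit : ρ^[5] x = ρ (ρ (ρ (ρ (ρ x)))) := by
    simp [Function.iterate_succ, Function.comp]
  set U0 : ℝ := 0.02 / 3.4445 ^ 4 with hU0def
  set U1 : ℝ := 3.4445 * U0 with hU1def
  set U2 : ℝ := 3.4445 * U1 with hU2def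
  set U3 : ℝ := 3.4445 * U2 with hU3def
  set U4 : ℝ := 3.4445 * U3 with hU4def
  have hU0 : U0 ≤ 0.02 := by rw [hU0def]; norm_num
  have hU1 : U1 ≤ 0.02 := by rw [hU1def, hU0def]; norm_num
  have hU2 : U2 ≤ 0.02 := by rw [hU2def, hU1def, hU0def]; norm_num
  have hU3 : U3 ≤ 0.02 := by rw [hU3def, hU2def, hU1def, hU0def]; norm_num
  have hU4 : U4 ≤ 0.02 := by rw [hU4def, hU3def, hU2def, hU1def, hU0def]; norm_num
  obtain ⟨hp1, hu1, hl1⟩ := rho_step x U0 hx hxU hU0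
  obtain ⟨hp2, hu2, hl2⟩ := rho_step (ρ x) U1 hp1 hu1 hU1
  obtain ⟨hp3, hu3, hl3⟩ := rho_step (ρ (ρ x)) U2 hp2 hu2 hU2
  obtain ⟨hp4, hu4, hl4⟩ := rho_step (ρ (ρ (ρ x))) U3 hp3 hu3 hU3
  obtain ⟨hp5, hu5, hl5⟩ := rho_step (ρ (ρ (ρ (ρ x)))) U4 hp4 hu4 hU4
  set L0 : ℝ := 3.4445 - 4.775 * U0 ^ 2 with hL0def
  set L1 : ℝ := 3.4445 - 4.775 * U1 ^ 2 with hL1def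
  set L2 : ℝ := 3.4445 - 4.775 * U2 ^ 2 with hL2def
  set L3 : ℝ := 3.4445 - 4.775 * U3 ^ 2 with hL3def
  set L4 : ℝ := 3.4445 - 4.775 * U4 ^ 2 with hL4def
  have hL0 : 0 < L0 := by rw [hL0def, hU0def]; norm_num
  have hL1 : 0 < L1 := by rw [hL1def, hU1def, hU0def]; norm_num
  have hL2 : 0 < L2 := by rw [hL2def, hU2def, hU1def, hU0def]; norm_num
  have hL3 : 0 < L3 := by rw [hL3def, hU3def, hU2def, hU1def, hU0def]; norm_num
  have hL4 : 0 < L4 := by rw [hL4def, hU4def, hU3def, hU2def, hU1def, hU0def]; norm_num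
  have c1 : L1 * (L0 * x) ≤ ρ (ρ x) := by
    calc L1 * (L0 * x) ≤ L1 * ρ x := by
          apply mul_le_mul_of_nonneg_left hl1 hL1.le
      _ ≤ ρ (ρ x) := hl2
  have c2 : L2 * (L1 * (L0 * x)) ≤ ρ (ρ (ρ x)) := by
    calc L2 * (L1 * (L0 * x)) ≤ L2 * ρ (ρ x) := by
          apply mul_le_mul_of_nonneg_left c1 hL2.le
      _ ≤ ρ (ρ (ρ x)) := hl3
  have c3 : L3 * (L2 * (L1 * (L0 * x))) ≤ ρ (ρ (ρ (ρ x))) := by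
    calc L3 * (L2 * (L1 * (L0 * x))) ≤ L3 * ρ (ρ (ρ x)) := by
          apply mul_le_mul_of_nonneg_left c2 hL3.le
      _ ≤ ρ (ρ (ρ (ρ x))) := hl4
  have c4 : L4 * (L3 * (L2 * (L1 * (L0 * x)))) ≤ ρ (ρ (ρ (ρ (ρ x)))) := by
    calc L4 * (L3 * (L2 * (L1 * (L0 * x)))) ≤ L4 * ρ (ρ (ρ (ρ x))) := by
          apply mul_le_mul_of_nonneg_left c3 hL4.le
      _ ≤ ρ (ρ (ρ (ρ (ρ x)))) := hl5
  have hprod : (483 : ℝ) ≤ L4 * (L3 * (L2 * (L1 * L0))) := by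
    rw [hL4def, hL3def, hL2def, hL1def, hL0def, hU4def, hU3def, hU2def, hU1def, hU0def]
    norm_num
  rw [hit]
  calc 483 * x ≤ (L4 * (L3 * (L2 * (L1 * L0)))) * x :=
        mul_le_mul_of_nonneg_right hprod hx.le
    _ = L4 * (L3 * (L2 * (L1 * (L0 * x)))) := by ring
    _ ≤ ρ (ρ (ρ (ρ (ρ x)))) := c4
end

section
/- Let ρ(x) = a x + b x³ + c x⁵ with a = 3.4445, b = −4.7750, c = 2.0315, and let ρ⁽⁵⁾ denote the 5-fold composition of ρ with itself. Then for every x ∈ [0.0001, 0.6], one has ρ⁽⁵⁾(x) > 0.03. -/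
/-- Interval step lemma: ρ maps [l, 1.25] into [3.2·l, 1.25] for small l. -/
lemma step {l x : ℝ} (hl0 : 0 ≤ l) (hl : l ≤ 0.1875) (hx1 : l ≤ x) (hx2 : x ≤ 1.25) :
    3.2 * l ≤ ρ x ∧ ρ x ≤ 1.25 := by
  have hx0 : 0 ≤ x := le_trans hl0 hx1
  unfold ρ
  constructor
  · rcases le_or_gt x 0.22 with h | h
    · nlinarith [mul_nonneg hx0 (sq_nonneg x), sq_nonneg (x*x),
        mul_nonneg (mul_nonneg hx0 hx0) (sq_nonneg x)]
    · nlinarith [sq_nonneg (x - 1.05), mul_nonneg (sub_nonneg.2 h.le) (sq_nonneg (x - 1.05)),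
        mul_nonneg (sub_nonneg.2 hx2) (sq_nonneg (x - 1.05)),
        mul_nonneg (mul_nonneg (sub_nonneg.2 h.le) (sub_nonneg.2 hx2)) (sq_nonneg (x-1.05)),
        sq_nonneg x]
  · nlinarith [mul_nonneg hx0 (sq_nonneg (x - 0.55)),
      mul_nonneg (sub_nonneg.2 hx2) (sq_nonneg (x-0.55)),
      mul_nonneg (mul_nonneg hx0 (sub_nonneg.2 hx2)) (sq_nonneg (x-0.55)),
      sq_nonneg (x-0.55), sq_nonneg x, mul_nonneg hx0 hx0]

/-- For every x ∈ [0.0001, 0.6], the fifth iterate satisfies ρ⁽⁵⁾(x) > 0.03. -/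
theorem stmt_7 : ∀ x ∈ Set.Icc (0.0001 : ℝ) 0.6, 0.03 < ρ^[5] x := by
  rintro x ⟨h1, h2⟩
  have s1 := step (by norm_num) (by norm_num) h1 (by linarith)
  have s2 := step (by norm_num) (by norm_num) s1.1 s1.2
  have s3 := step (by norm_num) (by norm_num) s2.1 s2.2
  have s4 := step (by norm_num) (by norm_num) s3.1 s3.2
  have s5 := step (by norm_num) (by norm_num) s4.1 s4.2
  simp only [Function.iterate_succ, Function.iterate_zero, Function.comp_apply, id_eq]
  nlinarith [s5.1]
end

section
/- Let θ* = (a*, b*, c*) = (3.4445, −4.7750, 2.0315) and for θ = (a, b, c) ∈ ℝ³ let ρ_θ(x) = a x + b x³ + c x⁵. There exists a strictly positive constant δ > 0 such that for every θ ∈ ℝ³ with ‖θ − θ*‖₂ < δ, the perturbed polynomial ρ_θ maps the compact interval I = [0.6, 1.205] into itself: for all x ∈ I, ρ_θ(x) ∈ I. In particular, the forward invariance of I is a structurally stable property under sufficiently small coefficient perturbations. -/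
set_option maxHeartbeats 1000000


/-- For coefficients θ = (a, b, c) ∈ ℝ³, the polynomial ρ_θ(x) = a x + b x³ + c x⁵. -/
noncomputable def ρθ (a b c x : ℝ) : ℝ := a * x + b * x ^ 3 + c * x ^ 5

lemma nom_up (x : ℝ) (h1 : 0.6 ≤ x) (h2 : x ≤ 1.205) :
    3.4445 * x + (-4.7750) * x ^ 3 + 2.0315 * x ^ 5 ≤ 1.1933 := by
  nlinarith [sq_nonneg (x - 1.05), sq_nonneg (x - 0.6), sq_nonneg (x + 1),
    mul_nonneg (sub_nonneg.2 h1) (sub_nonneg.2 h2), sq_nonneg ((x-1.05)*(x+1.3)),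
    mul_nonneg (mul_nonneg (sub_nonneg.2 h1) (sub_nonneg.2 h2)) (sq_nonneg (x-1.05))]

lemma nom_low (x : ℝ) (h1 : 0.6 ≤ x) (h2 : x ≤ 1.205) :
    0.68 ≤ 3.4445 * x + (-4.7750) * x ^ 3 + 2.0315 * x ^ 5 := by
  nlinarith [sq_nonneg (x - 1.0501), sq_nonneg (x - 0.5545),
    mul_nonneg (sub_nonneg.2 h1) (sub_nonneg.2 h2),
    mul_nonneg (mul_nonneg (sub_nonneg.2 h1) (sub_nonneg.2 h2)) (sq_nonneg (x-1.0501)),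
    sq_nonneg ((x-1.0501)*(x-0.5545))]

/-- There exists δ > 0 such that whenever the Euclidean distance of the coefficient vector
(a, b, c) to the nominal coefficients θ* = (3.4445, −4.7750, 2.0315) is less than δ, the
perturbed polynomial ρ_θ maps the compact interval I = [0.6, 1.205] into itself. -/
theorem stmt_10 :
    ∃ δ : ℝ, 0 < δ ∧
      ∀ a b c : ℝ,
        Real.sqrt ((a - 3.4445) ^ 2 + (b - (-4.7750)) ^ 2 + (c - 2.0315) ^ 2) < δ →
          ∀ x ∈ Set.Icc (0.6 : ℝ) 1.205, ρθ a b c x ∈ Set.Icc (0.6 : ℝ) 1.205 := by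
  refine ⟨0.001, by norm_num, fun a b c hd x hx => ?_⟩
  obtain ⟨h1, h2⟩ := hx
  set s := (a - 3.4445) ^ 2 + (b - (-4.7750)) ^ 2 + (c - 2.0315) ^ 2 with hs
  have hsnn : 0 ≤ s := by positivity
  have hslt : s < 0.001 ^ 2 := (Real.sqrt_lt' (by norm_num)).mp hd
  have ha : (a - 3.4445) ^ 2 < 0.001 ^ 2 := by nlinarith [sq_nonneg (b - (-4.7750)), sq_nonneg (c - 2.0315)]
  have hb : (b - (-4.7750)) ^ 2 < 0.001 ^ 2 := by nlinarith [sq_nonneg (a - 3.4445), sq_nonneg (c - 2.0315)]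
  have hc : (c - 2.0315) ^ 2 < 0.001 ^ 2 := by nlinarith [sq_nonneg (a - 3.4445), sq_nonneg (b - (-4.7750))]
  have ha' : -0.001 < a - 3.4445 ∧ a - 3.4445 < 0.001 := by constructor <;> nlinarith [sq_nonneg (a - 3.4445 + 0.001), sq_nonneg (a - 3.4445 - 0.001)]
  have hb' : -0.001 < b - (-4.7750) ∧ b - (-4.7750) < 0.001 := by constructor <;> nlinarith [sq_nonneg (b - (-4.7750) + 0.001), sq_nonneg (b - (-4.7750) - 0.001)]
  have hc' : -0.001 < c - 2.0315 ∧ c - 2.0315 < 0.001 := by constructor <;> nlinarith [sq_nonneg (c - 2.0315 + 0.001), sq_nonneg (c - 2.0315 - 0.001)]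
  have hup := nom_up x h1 h2
  have hlow := nom_low x h1 h2
  have hx0 : (0:ℝ) < x := by linarith
  have hx3 : x ^ 3 ≤ 1.205 ^ 3 := pow_le_pow_left₀ hx0.le h2 3
  have hx5 : x ^ 5 ≤ 1.205 ^ 5 := pow_le_pow_left₀ hx0.le h2 5
  have hx3p : 0 < x ^ 3 := by positivity
  have hx5p : 0 < x ^ 5 := by positivity
  have key : ρθ a b c x = (3.4445 * x + (-4.7750) * x ^ 3 + 2.0315 * x ^ 5)
      + (a - 3.4445) * x + (b - (-4.7750)) * x ^ 3 + (c - 2.0315) * x ^ 5 := by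
    simp [ρθ]; ring
  constructor
  · rw [key]
    nlinarith [mul_le_mul_of_nonneg_right ha'.1.le hx0.le,
      mul_le_mul_of_nonneg_right hb'.1.le hx3p.le,
      mul_le_mul_of_nonneg_right hc'.1.le hx5p.le]
  · rw [key]
    nlinarith [mul_le_mul_of_nonneg_right ha'.2.le hx0.le,
      mul_le_mul_of_nonneg_right hb'.2.le hx3p.le,
      mul_le_mul_of_nonneg_right hc'.2.le hx5p.le,
      mul_lt_mul_of_pos_right ha'.2 hx0]
end

section
/- Let ρ(x) = a x + b x³ + c x⁵ with a = 3.4445, b = −4.7750, c = 2.0315. Then the derivative ρ'(x) = a + 3b x² + 5c x⁴ has exactly two zeros in (0, ∞): one located in the interval (0.554, 0.555) (a local maximum of ρ) and one located in the interval (1.050, 1.051) (a local minimum of ρ); moreover ρ' > 0 on [0, 0.554] and ρ' < 0 on [0.56, 1.04]. -/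
/-- The derivative ρ'(x) = a + 3b x² + 5c x⁴ of the Muon Newton–Schulz polynomial. -/
noncomputable def ρ' (x : ℝ) : ℝ := 3.4445 + 3 * (-4.7750) * x ^ 2 + 5 * 2.0315 * x ^ 4

/-!
ρ' is a quadratic in x² with positive leading coefficient 10.1575. It changes sign on
[0.554, 0.555] and on [1.050, 1.051], so the intermediate value theorem gives roots x₁ < x₂
there, and by Vieta ρ' x = 10.1575 (x² - x₁²)(x² - x₂²). Every claim is then read off from the
signs of the two factors, the extrema through the first-derivative test.
-/

open Set

theorem add_mul_add_mul_sq_eq_mul_sub_mul_sub {R : Type*} [CommRing R] [IsDomain R]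
    {A B C s t : R} (hst : s ≠ t) (hs : A + B * s + C * s ^ 2 = 0)
    (ht : A + B * t + C * t ^ 2 = 0) (u : R) :
    A + B * u + C * u ^ 2 = C * (u - s) * (u - t) := by
  have hB : B + C * (s + t) = 0 := by
    refine (mul_eq_zero.1 ?_).resolve_left (sub_ne_zero.2 hst)
    linear_combination hs - ht
  linear_combination (u - s) * hB + hs

section SignOfEvenQuartic

variable {R : Type*} [CommRing R] [LinearOrder R] [IsStrictOrderedRing R] {C s t x : R}

theorem mul_sq_sub_sq_mul_sq_sub_sq_pos_of_lt (hC : 0 < C) (hx : 0 ≤ x) (hxs : x < s)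
    (hst : s < t) : 0 < C * (x ^ 2 - s ^ 2) * (x ^ 2 - t ^ 2) :=
  mul_pos_of_neg_of_neg
    (mul_neg_of_pos_of_neg hC (sub_neg.2 (pow_lt_pow_left₀ hxs hx two_ne_zero)))
    (sub_neg.2 (pow_lt_pow_left₀ (hxs.trans hst) hx two_ne_zero))

theorem mul_sq_sub_sq_mul_sq_sub_sq_neg (hC : 0 < C) (hs : 0 ≤ s) (hsx : s < x)
    (hxt : x < t) : C * (x ^ 2 - s ^ 2) * (x ^ 2 - t ^ 2) < 0 :=
  mul_neg_of_pos_of_neg (mul_pos hC (sub_pos.2 (pow_lt_pow_left₀ hsx hs two_ne_zero)))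
    (sub_neg.2 (pow_lt_pow_left₀ hxt (hs.trans hsx.le) two_ne_zero))

theorem mul_sq_sub_sq_mul_sq_sub_sq_pos_of_gt (hC : 0 < C) (hs : 0 ≤ s) (hst : s < t)
    (htx : t < x) : 0 < C * (x ^ 2 - s ^ 2) * (x ^ 2 - t ^ 2) :=
  mul_pos (mul_pos hC (sub_pos.2 (pow_lt_pow_left₀ (hst.trans htx) hs two_ne_zero)))
    (sub_pos.2 (pow_lt_pow_left₀ htx (hs.trans hst.le) two_ne_zero))

theorem eq_or_eq_of_mul_sq_sub_sq_mul_sq_sub_sq_eq_zero (hC : C ≠ 0) (hx : 0 ≤ x)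
    (hs : 0 ≤ s) (ht : 0 ≤ t) (h : C * (x ^ 2 - s ^ 2) * (x ^ 2 - t ^ 2) = 0) :
    x = s ∨ x = t := by
  rcases mul_eq_zero.1 h with h | h
  · exact .inl ((sq_eq_sq₀ hx hs).1 (sub_eq_zero.1 ((mul_eq_zero.1 h).resolve_left hC)))
  · exact .inr ((sq_eq_sq₀ hx ht).1 (sub_eq_zero.1 h))

end SignOfEvenQuartic

theorem hasDerivAt_rho (x : ℝ) : HasDerivAt ρ (ρ' x) x := by
  have h : HasDerivAt (fun y : ℝ => 3.4445 * y + (-4.7750) * y ^ 3 + 2.0315 * y ^ 5)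
      (3.4445 * 1 + (-4.7750) * ((3 : ℕ) * x ^ 2) + 2.0315 * ((5 : ℕ) * x ^ 4)) x :=
    (((hasDerivAt_id' x).const_mul _).add ((hasDerivAt_pow 3 x).const_mul _)).add
      ((hasDerivAt_pow 5 x).const_mul _)
  exact h.congr_deriv (by rw [ρ']; push_cast; ring)

theorem differentiable_rho : Differentiable ℝ ρ := fun x => (hasDerivAt_rho x).differentiableAt

theorem deriv_rho : deriv ρ = ρ' := funext fun x => (hasDerivAt_rho x).deriv

theorem continuous_rho' : Continuous ρ' := by
  unfold ρ'
  fun_prop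

theorem exists_rho'_eq_mul_sq_sub_sq_mul_sq_sub_sq :
    ∃ x₁ ∈ Ioo (0.554 : ℝ) 0.555, ∃ x₂ ∈ Ioo (1.050 : ℝ) 1.051,
      ∀ x, ρ' x = 10.1575 * (x ^ 2 - x₁ ^ 2) * (x ^ 2 - x₂ ^ 2) := by
  obtain ⟨x₁, hx₁, hρx₁⟩ := intermediate_value_Ioo' (by norm_num : (0.554 : ℝ) ≤ 0.555)
    continuous_rho'.continuousOn (show (0 : ℝ) ∈ Ioo (ρ' 0.555) (ρ' 0.554) by norm_num [ρ'])
  obtain ⟨x₂, hx₂, hρx₂⟩ := intermediate_value_Ioo (by norm_num : (1.050 : ℝ) ≤ 1.051)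
    continuous_rho'.continuousOn (show (0 : ℝ) ∈ Ioo (ρ' 1.050) (ρ' 1.051) by norm_num [ρ'])
  have hsq : x₁ ^ 2 < x₂ ^ 2 :=
    pow_lt_pow_left₀ (by linarith [hx₁.2, hx₂.1]) (by linarith [hx₁.1]) two_ne_zero
  refine ⟨x₁, hx₁, x₂, hx₂, fun x => ?_⟩
  have hquad (y : ℝ) : ρ' y = 3.4445 + 3 * (-4.7750) * y ^ 2 + 5 * 2.0315 * (y ^ 2) ^ 2 := by
    rw [ρ']; ring
  have hvieta := add_mul_add_mul_sq_eq_mul_sub_mul_sub hsq.ne ((hquad x₁).symm.trans hρx₁)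
    ((hquad x₂).symm.trans hρx₂) (x ^ 2)
  linear_combination hquad x + hvieta

/-- ρ' has exactly two zeros in (0, ∞): one in (0.554, 0.555), which is a local maximum
of ρ, and one in (1.050, 1.051), which is a local minimum of ρ; moreover ρ' > 0 on
[0, 0.554] and ρ' < 0 on [0.56, 1.04]. -/
theorem stmt_19 :
    ∃ x₁ ∈ Set.Ioo (0.554 : ℝ) 0.555, ∃ x₂ ∈ Set.Ioo (1.050 : ℝ) 1.051,
      ρ' x₁ = 0 ∧ ρ' x₂ = 0 ∧
      (∀ x ∈ Set.Ioi (0 : ℝ), ρ' x = 0 → x = x₁ ∨ x = x₂) ∧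
      IsLocalMax ρ x₁ ∧ IsLocalMin ρ x₂ ∧
      (∀ x ∈ Set.Icc (0 : ℝ) 0.554, 0 < ρ' x) ∧
      (∀ x ∈ Set.Icc (0.56 : ℝ) 1.04, ρ' x < 0) := by
  obtain ⟨x₁, ⟨hx₁l, hx₁r⟩, x₂, ⟨hx₂l, hx₂r⟩, hρ'⟩ := exists_rho'_eq_mul_sq_sub_sq_mul_sq_sub_sq
  have hC : (0 : ℝ) < 10.1575 := by norm_num
  have hx₁ : (0 : ℝ) ≤ x₁ := by linarith
  have hx₁₂ : x₁ < x₂ := by linarith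
  refine ⟨x₁, ⟨hx₁l, hx₁r⟩, x₂, ⟨hx₂l, hx₂r⟩, by simp [hρ'], by simp [hρ'], ?_, ?_, ?_, ?_, ?_⟩
  · exact fun x hx hx0 => eq_or_eq_of_mul_sq_sub_sq_mul_sq_sub_sq_eq_zero hC.ne' (le_of_lt hx)
      hx₁ (by linarith) (hρ' x ▸ hx0)
  · refine isLocalMax_of_deriv_Ioo (by linarith : (0 : ℝ) < x₁) hx₁₂
      differentiable_rho.continuous.continuousAt differentiable_rho.differentiableOn
      differentiable_rho.differentiableOn (fun x hx => ?_) (fun x hx => ?_) <;> rw [deriv_rho, hρ']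
    · exact (mul_sq_sub_sq_mul_sq_sub_sq_pos_of_lt hC hx.1.le hx.2 hx₁₂).le
    · exact (mul_sq_sub_sq_mul_sq_sub_sq_neg hC hx₁ hx.1 hx.2).le
  · refine isLocalMin_of_deriv_Ioo hx₁₂ (lt_add_one x₂)
      differentiable_rho.continuous.continuousAt differentiable_rho.differentiableOn
      differentiable_rho.differentiableOn (fun x hx => ?_) (fun x hx => ?_) <;> rw [deriv_rho, hρ']
    · exact (mul_sq_sub_sq_mul_sq_sub_sq_neg hC hx₁ hx.1 hx.2).le
    · exact (mul_sq_sub_sq_mul_sq_sub_sq_pos_of_gt hC hx₁ hx₁₂ hx.1).le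
  · intro x hx
    rw [hρ']
    exact mul_sq_sub_sq_mul_sq_sub_sq_pos_of_lt hC hx.1 (by linarith [hx.2]) hx₁₂
  · intro x hx
    rw [hρ']
    exact mul_sq_sub_sq_mul_sq_sub_sq_neg hC hx₁ (by linarith [hx.1]) (by linarith [hx.2])
end
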